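/- Let $m \geq 2$ and let $f \in \mathbb{C}[[x,y]]$ with homogeneous leading term $f_m$ of degree $m$ satisfying $f_m = x^\mu y^\nu g$, $\mu, \nu \geq 1$, $x \nmid g$, $y \nmid g$. Let $g' \in \mathbb{C}[[x,y]]$ and suppose $a, b, a', b' \in \mathbb{C}[[x,y]]$ are such that $g' - a f_x - b f_y \in \langle x,y\rangle^m$ and $g' - a' f_x - b' f_y \in \langle x,y\rangle^m$, where $f_x = \partial f/\partial x$, $f_y = \partial f/\partial y$. Then $a(0,0) = a'(0,0)$ and $b(0,0) = b'(0,0)$. -/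

import Mathlib

/-!
Subtracting the two relations gives `(a - a') f_x + (b - b') f_y ∈ 𝔪^m`. As `f_x, f_y ∈ 𝔪^(m-1)`,
the degree `m - 1` part of this series is `α ∂ₓf_m + β ∂_y f_m`, where `α, β` are the constant
terms of `a - a'` and `b - b'`; hence this polynomial vanishes. Writing `f_m = x^μ q` with `x ∤ q`,
the derivative `∂_y f_m` is divisible by `x^μ` whereas, in characteristic zero, `∂ₓ f_m` is not,
so `α = 0`; symmetrically `β = 0`.
-/

set_option synthInstance.maxHeartbeats 1000000
set_option maxHeartbeats 2000000

open MvPowerSeries TrivSqZeroExt DualNumber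

noncomputable section

abbrev R2 := MvPowerSeries (Fin 2) ℂ

def Mxy : Ideal R2 := Ideal.span {MvPowerSeries.X 0, MvPowerSeries.X 1}

/-- Formal partial derivative of a power series in two variables. -/
def pd (i : Fin 2) (f : R2) : R2 :=
  fun d => (d i + 1 : ℂ) * MvPowerSeries.coeff (R := ℂ) (d + Finsupp.single i 1) f

/-- The element `x + ε a` of the dual numbers over `ℂ[[x,y]]`. -/
def Xa (a : R2) : DualNumber R2 := inl (MvPowerSeries.X 0) + eps * inl a

/-- The element `y + ε b` of the dual numbers over `ℂ[[x,y]]`. -/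
def Yb (b : R2) : DualNumber R2 := inl (MvPowerSeries.X 1) + eps * inl b

/-- The `n`-th term of the expansion of `f (x + ε a, y + ε b)`. -/
def termD (a b f : R2) (n : Fin 2 →₀ ℕ) : DualNumber R2 :=
  inl (MvPowerSeries.C (σ := Fin 2) (R := ℂ) (MvPowerSeries.coeff (R := ℂ) n f)) *
    (Xa a ^ (n 0) * Yb b ^ (n 1))

/-- Substitution `f (x + ε a, y + ε b)`, defined coefficientwise: each coefficient of
each component only receives contributions from finitely many terms of the expansion. -/
def substDual (a b f : R2) : DualNumber R2 :=
  TrivSqZeroExt.inl (R := R2) (M := R2) ((fun d => MvPowerSeries.coeff (R := ℂ) d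
        (fst (∑ n ∈ Finset.Iic (d + Finsupp.single 0 1 + Finsupp.single 1 1),
          termD a b f n)) : R2)) +
  TrivSqZeroExt.inr (R := R2) (M := R2) ((fun d => MvPowerSeries.coeff (R := ℂ) d
        (snd (∑ n ∈ Finset.Iic (d + Finsupp.single 0 1 + Finsupp.single 1 1),
          termD a b f n)) : R2))

namespace MvPolynomial

variable {σ K : Type*} [Field K]

theorem not_X_dvd_X_pow_mul {i j : σ} (hij : i ≠ j) (n : ℕ) {q : MvPolynomial σ K}
    (hq : ¬ X i ∣ q) : ¬ X i ∣ X j ^ n * q := by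
  intro h
  rcases X_prime.dvd_or_dvd h with hX | hX
  · exact hij (X_dvd_X.mp (X_prime.dvd_of_dvd_pow hX))
  · exact hq hX

theorem pderiv_X_pow_mul_of_ne {i j : σ} (hij : i ≠ j) (k : ℕ) (q : MvPolynomial σ K) :
    pderiv j (X i ^ k * q) = X i ^ k * pderiv j q := by
  simp [Derivation.leibniz, pderiv_X_of_ne hij]

theorem pderiv_X_pow_succ_mul (i : σ) (k : ℕ) (q : MvPolynomial σ K) :
    pderiv i (X i ^ (k + 1) * q) = X i ^ k * (C ((k : K) + 1) * q + X i * pderiv i q) := by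
  simp only [Derivation.leibniz, Derivation.leibniz_pow, pderiv_X_self, smul_eq_mul,
    nsmul_eq_mul, Nat.add_sub_cancel, Nat.cast_add, Nat.cast_one, map_add, map_one, map_natCast]
  ring

variable [CharZero K]

theorem not_X_pow_dvd_pderiv_X_pow_mul {i : σ} {q : MvPolynomial σ K} (hq : ¬ X i ∣ q)
    (k : ℕ) : ¬ X i ^ (k + 1) ∣ pderiv i (X i ^ (k + 1) * q) := by
  rw [pderiv_X_pow_succ_mul, pow_succ, mul_dvd_mul_iff_left (pow_ne_zero _ (X_ne_zero i)),
    dvd_add_left (dvd_mul_right _ _), ((Nat.cast_add_one_ne_zero k).isUnit.map C).dvd_mul_left]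
  exact hq

theorem eq_zero_of_C_mul_pderiv_add_C_mul_pderiv_eq_zero {i j : σ} (hij : i ≠ j) {k : ℕ}
    (hk : k ≠ 0) {q : MvPolynomial σ K} (hq : ¬ X i ∣ q) {α β : K}
    (h : C α * pderiv i (X i ^ k * q) + C β * pderiv j (X i ^ k * q) = 0) : α = 0 := by
  obtain ⟨k, rfl⟩ := Nat.exists_eq_succ_of_ne_zero hk
  by_contra hα
  refine not_X_pow_dvd_pderiv_X_pow_mul hq k (((Ne.isUnit hα).map C).dvd_mul_left.mp ?_)
  rw [eq_neg_of_add_eq_zero_left h, pderiv_X_pow_mul_of_ne hij]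
  exact (dvd_mul_of_dvd_right (dvd_mul_right _ _) _).neg_right

end MvPolynomial

namespace MvPowerSeries

variable {σ R : Type*} [CommRing R]

theorem le_order_of_mem_pow {I : Ideal (MvPowerSeries σ R)}
    (hI : I ≤ RingHom.ker (constantCoeff (σ := σ) (R := R))) {k : ℕ} {f : MvPowerSeries σ R}
    (hf : f ∈ I ^ k) : (k : ℕ∞) ≤ f.order := by
  induction k generalizing f with
  | zero => simp
  | succ k ih =>
    rw [pow_succ] at hf
    refine Submodule.mul_induction_on hf (fun p hp q hq => ?_) (fun p q hp hq => ?_)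
    · calc ((k + 1 : ℕ) : ℕ∞) ≤ p.order + q.order := by
            push_cast
            exact add_le_add (ih hp) (one_le_order_iff_constCoeff_eq_zero.mpr (hI hq))
        _ ≤ (p * q).order := le_order_mul
    · exact (le_min hp hq).trans min_order_le_add

theorem le_order_pderiv {f : MvPowerSeries σ R} {n : ℕ} (hf : ((n + 1 : ℕ) : ℕ∞) ≤ f.order)
    (i : σ) : (n : ℕ∞) ≤ (pderiv R i f).order := by
  refine nat_le_order fun d hd => ?_
  rw [coeff_pderiv, coeff_of_lt_order, zero_mul]
  refine lt_of_lt_of_le ?_ hf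
  simp only [map_add, Finsupp.degree_single]
  exact_mod_cast Nat.add_lt_add_right hd 1

theorem homogeneousComponent_pderiv (n : ℕ) (i : σ) (f : MvPowerSeries σ R) :
    homogeneousComponent n (pderiv R i f) = pderiv R i (homogeneousComponent (n + 1) f) := by
  ext d
  simp only [coeff_pderiv, coeff_homogeneousComponent, map_add,
    Finsupp.degree_single, Nat.add_right_cancel_iff]
  split_ifs <;> simp

theorem homogeneousComponent_zero (f : MvPowerSeries σ R) :
    homogeneousComponent 0 f = C (constantCoeff f) := by
  classical
  ext d
  simp only [coeff_homogeneousComponent, coeff_C, Finsupp.degree_eq_zero_iff]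
  split_ifs with h <;> simp [h]

theorem homogeneousComponent_mul_of_le_order_right {v : MvPowerSeries σ R} {n : ℕ}
    (hv : (n : ℕ∞) ≤ v.order) (u : MvPowerSeries σ R) :
    homogeneousComponent n (u * v) = C (constantCoeff u) * homogeneousComponent n v := by
  rw [← homogeneousComponent_zero, ← homogeneousComponent_mul_of_le_order zero_le hv,
    zero_add]

theorem C_mul_pderiv_add_C_mul_pderiv_homogeneousComponent_eq_zero {f u v : MvPowerSeries σ R}
    {n : ℕ} (hf : ((n + 1 : ℕ) : ℕ∞) ≤ f.order) (i j : σ)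
    (huv : ((n + 1 : ℕ) : ℕ∞) ≤ (u * pderiv R i f + v * pderiv R j f).order) :
    C (constantCoeff u) * pderiv R i (homogeneousComponent (n + 1) f) +
      C (constantCoeff v) * pderiv R j (homogeneousComponent (n + 1) f) = 0 := by
  have h := homogeneousComponent_of_lt_order_eq_zero
    (lt_of_lt_of_le (by exact_mod_cast Nat.lt_succ_self n) huv)
  rwa [map_add, homogeneousComponent_mul_of_le_order_right (le_order_pderiv hf i),
    homogeneousComponent_mul_of_le_order_right (le_order_pderiv hf j),
    homogeneousComponent_pderiv, homogeneousComponent_pderiv] at h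

theorem homogeneousComponent_eq_coe {f : MvPowerSeries σ R} {p : MvPolynomial σ R} {n : ℕ}
    (hp : p.IsHomogeneous n) (hcoeff : ∀ d : σ →₀ ℕ, d.degree = n → p.coeff d = coeff d f) :
    homogeneousComponent n f = p := by
  ext d
  rw [coeff_homogeneousComponent, MvPolynomial.coeff_coe]
  split_ifs with hd
  · exact (hcoeff d hd).symm
  · exact (hp.coeff_eq_zero hd).symm

end MvPowerSeries

theorem Mxy_le_ker_constantCoeff : Mxy ≤ RingHom.ker (constantCoeff (σ := Fin 2) (R := ℂ)) := by
  rw [Mxy, Ideal.span_le]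
  rintro x (rfl | rfl) <;> simp

theorem pd_eq_pderiv (i : Fin 2) (f : R2) : pd i f = pderiv ℂ i f := by
  ext d
  exact (coeff_pderiv f d).trans (mul_comm _ _) |>.symm

theorem section_tangent_unique_general (m μ ν : ℕ) (hm : 2 ≤ m) (f : R2)
    (hf : f ∈ Mxy ^ m)
    (fm g : MvPolynomial (Fin 2) ℂ) (hfm : fm.IsHomogeneous m)
    (hcoeff : ∀ d : Fin 2 →₀ ℕ, d 0 + d 1 = m →
      MvPolynomial.coeff d fm = MvPowerSeries.coeff (R := ℂ) d f)
    (hμ : 1 ≤ μ) (hν : 1 ≤ ν)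
    (heq : fm = MvPolynomial.X 0 ^ μ * MvPolynomial.X 1 ^ ν * g)
    (hgx : ¬ MvPolynomial.X 0 ∣ g) (hgy : ¬ MvPolynomial.X 1 ∣ g)
    (g' a b a' b' : R2)
    (hab : g' - a * pd 0 f - b * pd 1 f ∈ Mxy ^ m)
    (hab' : g' - a' * pd 0 f - b' * pd 1 f ∈ Mxy ^ m) :
    MvPowerSeries.constantCoeff (σ := Fin 2) (R := ℂ) a = MvPowerSeries.constantCoeff (σ := Fin 2) (R := ℂ) a' ∧
    MvPowerSeries.constantCoeff (σ := Fin 2) (R := ℂ) b = MvPowerSeries.constantCoeff (σ := Fin 2) (R := ℂ) b' := by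
  obtain ⟨n, rfl⟩ : ∃ n, m = n + 1 := ⟨m - 1, by omega⟩
  have hleading : homogeneousComponent (n + 1) f = (fm : R2) :=
    homogeneousComponent_eq_coe hfm fun d hd =>
      hcoeff d (by rwa [Finsupp.degree_eq_sum, Fin.sum_univ_two] at hd)
  have hdiff : (a - a') * pderiv ℂ 0 f + (b - b') * pderiv ℂ 1 f ∈ Mxy ^ (n + 1) := by
    convert Ideal.sub_mem _ hab' hab using 1
    simp only [pd_eq_pderiv]
    ring
  have hpoly : MvPolynomial.C (constantCoeff a - constantCoeff a') * MvPolynomial.pderiv 0 fm +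
      MvPolynomial.C (constantCoeff b - constantCoeff b') * MvPolynomial.pderiv 1 fm = 0 := by
    have h := C_mul_pderiv_add_C_mul_pderiv_homogeneousComponent_eq_zero
      (le_order_of_mem_pow Mxy_le_ker_constantCoeff hf) 0 1
      (le_order_of_mem_pow Mxy_le_ker_constantCoeff hdiff)
    rwa [map_sub constantCoeff, map_sub constantCoeff, hleading, pderiv_coe, pderiv_coe,
      ← MvPolynomial.coe_C, ← MvPolynomial.coe_C, ← MvPolynomial.coe_mul, ← MvPolynomial.coe_mul,
      ← MvPolynomial.coe_add, MvPolynomial.coe_eq_zero_iff] at h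
  have hfm_x : fm = MvPolynomial.X 0 ^ μ * (MvPolynomial.X 1 ^ ν * g) := by rw [heq, mul_assoc]
  have hfm_y : fm = MvPolynomial.X 1 ^ ν * (MvPolynomial.X 0 ^ μ * g) := by rw [heq]; ring
  rw [← sub_eq_zero, ← sub_eq_zero (a := constantCoeff b)]
  constructor
  · exact MvPolynomial.eq_zero_of_C_mul_pderiv_add_C_mul_pderiv_eq_zero zero_ne_one
      (Nat.one_le_iff_ne_zero.mp hμ) (MvPolynomial.not_X_dvd_X_pow_mul zero_ne_one ν hgx)
      (hfm_x ▸ hpoly)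
  · rw [add_comm, hfm_y] at hpoly
    exact MvPolynomial.eq_zero_of_C_mul_pderiv_add_C_mul_pderiv_eq_zero one_ne_zero
      (Nat.one_le_iff_ne_zero.mp hν) (MvPolynomial.not_X_dvd_X_pow_mul one_ne_zero μ hgy) hpoly

/-- Uniqueness of the tangent vector of the equimultiple section in the
non-unitangential case: the constant terms of `a, b` are determined. -/
theorem section_tangent_unique (m μ ν : ℕ) (hm : 2 ≤ m) (f : R2)
    (hf : f ∈ Mxy ^ m) (hf' : f ∉ Mxy ^ (m + 1))
    (fm g : MvPolynomial (Fin 2) ℂ) (hfm : fm.IsHomogeneous m)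
    (hcoeff : ∀ d : Fin 2 →₀ ℕ, d 0 + d 1 = m →
      MvPolynomial.coeff d fm = MvPowerSeries.coeff (R := ℂ) d f)
    (hμ : 1 ≤ μ) (hν : 1 ≤ ν)
    (heq : fm = MvPolynomial.X 0 ^ μ * MvPolynomial.X 1 ^ ν * g)
    (hgx : ¬ MvPolynomial.X 0 ∣ g) (hgy : ¬ MvPolynomial.X 1 ∣ g)
    (g' a b a' b' : R2)
    (hab : g' - a * pd 0 f - b * pd 1 f ∈ Mxy ^ m)
    (hab' : g' - a' * pd 0 f - b' * pd 1 f ∈ Mxy ^ m) :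
    MvPowerSeries.constantCoeff (σ := Fin 2) (R := ℂ) a = MvPowerSeries.constantCoeff (σ := Fin 2) (R := ℂ) a' ∧
    MvPowerSeries.constantCoeff (σ := Fin 2) (R := ℂ) b = MvPowerSeries.constantCoeff (σ := Fin 2) (R := ℂ) b' :=
  section_tangent_unique_general m μ ν hm f hf fm g hfm hcoeff hμ hν heq hgx hgy g' a b a' b' hab
    hab'

end
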